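/- If p ∈ C⁺(0,α) and q ∈ C⁺(p,β) (with α,β ≥ 0), then q ∈ C⁺(0,γ) for γ = max{α, β, (ε₂/2)√((αβ+2β)C)}; the analogous statement holds for negative cones. -/

import Mathlib

open Matrix

/-- `⟨Bx,ξ⟩ ∈ ℝ^{m₂}`. -/
noncomputable def bvec {m₁ m₂ : ℕ} (B : Fin m₂ → Matrix (Fin m₁) (Fin m₁) ℝ)
    (x ξ : Fin m₁ → ℝ) : Fin m₂ → ℝ :=
  fun j => (B j).mulVec x ⬝ᵥ ξ

/-- The step-2 group law `(x,t) ⋆ (ξ,τ) = (x + ξ, t + τ + ½⟨Bx,ξ⟩)`. -/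
noncomputable def gmul {m₁ m₂ : ℕ} (B : Fin m₂ → Matrix (Fin m₁) (Fin m₁) ℝ)
    (p q : (Fin m₁ → ℝ) × (Fin m₂ → ℝ)) : (Fin m₁ → ℝ) × (Fin m₂ → ℝ) :=
  (p.1 + q.1, p.2 + q.2 + (1 / 2 : ℝ) • bvec B p.1 q.1)

/-- Euclidean norm on `ℝ^n`. -/
noncomputable def eunorm {n : ℕ} (x : Fin n → ℝ) : ℝ :=
  Real.sqrt (∑ i, x i ^ 2)

/-- Component of `x` along the horizontal direction `e₁`: `x^∥ = x₁e₁`. -/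
noncomputable def xpar {m : ℕ} (x : Fin (m + 1) → ℝ) : Fin (m + 1) → ℝ :=
  Pi.single 0 (x 0)

/-- Orthogonal component `x^⊥ = x - x^∥`. -/
noncomputable def xperp {m : ℕ} (x : Fin (m + 1) → ℝ) : Fin (m + 1) → ℝ :=
  x - xpar x

/-- The positive open cone `C⁺(0,α)` with vertex `0` and aperture `α`:
`max{|x^⊥|, ε₂|t − ½⟨Bx^⊥, x^∥⟩|^{1/2}} < α|x₁|` with `x₁ > 0`. -/
noncomputable def posCone {m m₂ : ℕ}
    (B : Fin m₂ → Matrix (Fin (m + 1)) (Fin (m + 1)) ℝ) (ε₂ α : ℝ) :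
    Set ((Fin (m + 1) → ℝ) × (Fin m₂ → ℝ)) :=
  {p | max (eunorm (xperp p.1))
        (ε₂ * Real.sqrt (eunorm (p.2 - (1 / 2 : ℝ) • bvec B (xperp p.1) (xpar p.1))))
      < α * |p.1 0| ∧ 0 < p.1 0}


/-- The negative open cone `C⁻(0,α)`: same condition with `x₁ < 0`. -/
noncomputable def negCone {m m₂ : ℕ}
    (B : Fin m₂ → Matrix (Fin (m + 1)) (Fin (m + 1)) ℝ) (ε₂ α : ℝ) :
    Set ((Fin (m + 1) → ℝ) × (Fin m₂ → ℝ)) :=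
  {p | max (eunorm (xperp p.1))
        (ε₂ * Real.sqrt (eunorm (p.2 - (1 / 2 : ℝ) • bvec B (xperp p.1) (xpar p.1))))
      < α * |p.1 0| ∧ p.1 0 < 0}

/-!
Write `q = p ⋆ c` with `p = (x, s)`, `c = (ξ, τ)`. The horizontal part is subadditive:
`|(x + ξ)^⊥| ≤ |x^⊥| + |ξ^⊥| < α|x₁| + β|ξ₁|`. For the vertical part, skew-symmetry gives
`⟨Bx^∥, ξ^∥⟩ = 0`, and the corrected vertical coordinate `T(x, s) = s − ½⟨Bx^⊥, x^∥⟩` satisfies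
`T(q) = T(p) + T(c) + ⟨Bx^∥, ξ^⊥⟩ + ½⟨Bx^⊥, ξ^⊥⟩`. The two cross terms are bounded by
`C|x₁|·β|ξ₁| + ½C·α|x₁|·β|ξ₁|`, so that
`ε₂²|T(q)| < α²x₁² + β²ξ₁² + ½ε₂²(αβ + 2β)C|x₁||ξ₁| ≤ γ²(|x₁| + |ξ₁|)²`,
and `|x₁| + |ξ₁| = |x₁ + ξ₁|` because `x₁` and `ξ₁` have the same sign.
-/

section Euclidean

lemma eunorm_eq_norm {n : ℕ} (x : Fin n → ℝ) : eunorm x = ‖WithLp.toLp 2 x‖ := by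
  simp [eunorm, EuclideanSpace.norm_eq, Real.norm_eq_abs, sq_abs]

lemma eunorm_nonneg {n : ℕ} (x : Fin n → ℝ) : 0 ≤ eunorm x := Real.sqrt_nonneg _

lemma eunorm_add_le {n : ℕ} (x y : Fin n → ℝ) : eunorm (x + y) ≤ eunorm x + eunorm y := by
  simpa only [eunorm_eq_norm, WithLp.toLp_add] using norm_add_le _ _

lemma eunorm_smul {n : ℕ} (c : ℝ) (x : Fin n → ℝ) : eunorm (c • x) = |c| * eunorm x := by
  simp only [eunorm_eq_norm, WithLp.toLp_smul, norm_smul, Real.norm_eq_abs]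

lemma eunorm_xpar {m : ℕ} (x : Fin (m + 1) → ℝ) : eunorm (xpar x) = |x 0| := by
  simp [eunorm, xpar, Pi.single_apply, apply_ite (· ^ 2), Real.sqrt_sq_eq_abs]

end Euclidean

section Bilinear

variable {m₁ m₂ : ℕ} (B : Fin m₂ → Matrix (Fin m₁) (Fin m₁) ℝ)

lemma bvec_add_left (x y ξ : Fin m₁ → ℝ) :
    bvec B (x + y) ξ = bvec B x ξ + bvec B y ξ := by
  funext j; simp [bvec, Matrix.mulVec_add, add_dotProduct]

lemma bvec_add_right (x ξ η : Fin m₁ → ℝ) :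
    bvec B x (ξ + η) = bvec B x ξ + bvec B x η := by
  funext j; simp [bvec, dotProduct_add]

lemma bvec_swap (hB : ∀ j, (B j)ᵀ = -B j) (x ξ : Fin m₁ → ℝ) :
    bvec B ξ x = -bvec B x ξ := by
  funext j
  simp only [bvec, Pi.neg_apply, dotProduct_comm ((B j).mulVec ξ), Matrix.dotProduct_mulVec,
    ← Matrix.mulVec_transpose, hB j, Matrix.neg_mulVec, neg_dotProduct]

end Bilinear

section Cone

variable {m m₂ : ℕ} (B : Fin m₂ → Matrix (Fin (m + 1)) (Fin (m + 1)) ℝ)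

lemma xpar_add (x y : Fin (m + 1) → ℝ) : xpar (x + y) = xpar x + xpar y := by
  simp [xpar, Pi.single_add]

lemma xperp_add (x y : Fin (m + 1) → ℝ) : xperp (x + y) = xperp x + xperp y := by
  simp only [xperp, xpar_add]; abel

lemma xpar_add_xperp (x : Fin (m + 1) → ℝ) : xpar x + xperp x = x := by
  simp [xperp]

lemma bvec_xpar_xpar (hB : ∀ j, (B j)ᵀ = -B j) (x ξ : Fin (m + 1) → ℝ) :
    bvec B (xpar x) (xpar ξ) = 0 := by
  funext j
  have hdiag : B j 0 0 = 0 := by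
    have h := congrFun (congrFun (hB j) 0) 0
    simp only [Matrix.transpose_apply, Matrix.neg_apply] at h
    linarith
  simp [bvec, xpar, Matrix.mulVec_single, dotProduct_single, hdiag]

/-- The vertical coordinate `t − ½⟨Bx^⊥, x^∥⟩` in which the cones are defined. -/
noncomputable def vertCoord (p : (Fin (m + 1) → ℝ) × (Fin m₂ → ℝ)) : Fin m₂ → ℝ :=
  p.2 - (1 / 2 : ℝ) • bvec B (xperp p.1) (xpar p.1)

/-- `C^±(0, α)` is `{p | coneGauge B ε₂ p < α |p.1 0|}` intersected with a half-space. -/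
noncomputable def coneGauge (ε₂ : ℝ) (p : (Fin (m + 1) → ℝ) × (Fin m₂ → ℝ)) : ℝ :=
  max (eunorm (xperp p.1)) (ε₂ * Real.sqrt (eunorm (vertCoord B p)))

lemma vertCoord_gmul (hB : ∀ j, (B j)ᵀ = -B j) (p c : (Fin (m + 1) → ℝ) × (Fin m₂ → ℝ)) :
    vertCoord B (gmul B p c) = vertCoord B p + vertCoord B c
      + bvec B (xpar p.1) (xperp c.1) + (1 / 2 : ℝ) • bvec B (xperp p.1) (xperp c.1) := by
  have hcross : bvec B p.1 c.1 = bvec B (xpar p.1) (xperp c.1) + bvec B (xperp p.1) (xpar c.1)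
      + bvec B (xperp p.1) (xperp c.1) := by
    conv_lhs => rw [← xpar_add_xperp p.1, ← xpar_add_xperp c.1]
    rw [bvec_add_left, bvec_add_right, bvec_add_right, bvec_xpar_xpar B hB]
    abel
  simp only [vertCoord, gmul, xperp_add, xpar_add, bvec_add_left, bvec_add_right, hcross,
    bvec_swap B hB (xpar p.1) (xperp c.1)]
  module

lemma eunorm_vertCoord_gmul_le (hB : ∀ j, (B j)ᵀ = -B j) {C : ℝ}
    (hCB : ∀ x ξ : Fin (m + 1) → ℝ, eunorm (bvec B x ξ) ≤ C * eunorm x * eunorm ξ)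
    (p c : (Fin (m + 1) → ℝ) × (Fin m₂ → ℝ)) :
    eunorm (vertCoord B (gmul B p c)) ≤ eunorm (vertCoord B p) + eunorm (vertCoord B c)
      + C * |p.1 0| * eunorm (xperp c.1) + C / 2 * eunorm (xperp p.1) * eunorm (xperp c.1) := by
  have h₁ := hCB (xpar p.1) (xperp c.1)
  have h₂ := hCB (xperp p.1) (xperp c.1)
  rw [eunorm_xpar] at h₁
  rw [vertCoord_gmul B hB]
  refine (eunorm_add_le _ _).trans ?_
  rw [eunorm_smul, abs_of_pos (by norm_num : (0 : ℝ) < 1 / 2)]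
  linarith [eunorm_add_le (vertCoord B p + vertCoord B c) (bvec B (xpar p.1) (xperp c.1)),
    eunorm_add_le (vertCoord B p) (vertCoord B c)]

lemma eunorm_vertCoord_gmul_le_of_le (hB : ∀ j, (B j)ᵀ = -B j) {C : ℝ} (hC : 0 ≤ C)
    (hCB : ∀ x ξ : Fin (m + 1) → ℝ, eunorm (bvec B x ξ) ≤ C * eunorm x * eunorm ξ)
    {α β : ℝ} {p c : (Fin (m + 1) → ℝ) × (Fin m₂ → ℝ)}
    (hp : eunorm (xperp p.1) ≤ α * |p.1 0|) (hc : eunorm (xperp c.1) ≤ β * |c.1 0|) :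
    eunorm (vertCoord B (gmul B p c)) ≤ eunorm (vertCoord B p) + eunorm (vertCoord B c)
      + C * (α * β + 2 * β) / 2 * (|p.1 0| * |c.1 0|) := by
  have hαX : 0 ≤ α * |p.1 0| := (eunorm_nonneg _).trans hp
  have h₁ : C * |p.1 0| * eunorm (xperp c.1) ≤ C * |p.1 0| * (β * |c.1 0|) :=
    mul_le_mul_of_nonneg_left hc (by positivity)
  have h₂ : C / 2 * eunorm (xperp p.1) * eunorm (xperp c.1)
      ≤ C / 2 * (α * |p.1 0|) * (β * |c.1 0|) :=
    mul_le_mul (mul_le_mul_of_nonneg_left hp (by positivity)) hc (eunorm_nonneg _)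
      (mul_nonneg (by positivity) hαX)
  linarith [eunorm_vertCoord_gmul_le B hB hCB p c]

lemma mul_sqrt_lt_iff {ε a b : ℝ} (hε : 0 ≤ ε) (hb : 0 < b) :
    ε * Real.sqrt a < b ↔ ε ^ 2 * a < b ^ 2 := by
  rw [← Real.sqrt_lt' hb, Real.sqrt_mul (sq_nonneg ε), Real.sqrt_sq hε]

lemma eunorm_xperp_gmul_lt {α β γ : ℝ} (hαγ : α ≤ γ) (hβγ : β ≤ γ)
    {p c : (Fin (m + 1) → ℝ) × (Fin m₂ → ℝ)}
    (hp : eunorm (xperp p.1) < α * |p.1 0|) (hc : eunorm (xperp c.1) < β * |c.1 0|) :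
    eunorm (xperp (gmul B p c).1) < γ * (|p.1 0| + |c.1 0|) :=
  calc eunorm (xperp (p.1 + c.1)) ≤ eunorm (xperp p.1) + eunorm (xperp c.1) := by
        rw [xperp_add]; exact eunorm_add_le _ _
    _ < α * |p.1 0| + β * |c.1 0| := add_lt_add hp hc
    _ ≤ γ * (|p.1 0| + |c.1 0|) := by
        rw [mul_add]
        exact add_le_add (mul_le_mul_of_nonneg_right hαγ (abs_nonneg _))
          (mul_le_mul_of_nonneg_right hβγ (abs_nonneg _))

lemma mul_sqrt_vertCoord_gmul_lt (hB : ∀ j, (B j)ᵀ = -B j) {ε₂ C : ℝ} (hε₂ : 0 ≤ ε₂)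
    (hC : 0 ≤ C)
    (hCB : ∀ x ξ : Fin (m + 1) → ℝ, eunorm (bvec B x ξ) ≤ C * eunorm x * eunorm ξ)
    {α β : ℝ} {p c : (Fin (m + 1) → ℝ) × (Fin m₂ → ℝ)}
    (hp : coneGauge B ε₂ p < α * |p.1 0|) (hc : coneGauge B ε₂ c < β * |c.1 0|) :
    ε₂ * Real.sqrt (eunorm (vertCoord B (gmul B p c)))
      < max (max α β) (ε₂ / 2 * Real.sqrt ((α * β + 2 * β) * C)) * (|p.1 0| + |c.1 0|) := by
  set γ := max (max α β) (ε₂ / 2 * Real.sqrt ((α * β + 2 * β) * C))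
  set X := |p.1 0|
  set Y := |c.1 0|
  obtain ⟨hpH, hpV⟩ := max_lt_iff.mp hp
  obtain ⟨hcH, hcV⟩ := max_lt_iff.mp hc
  have hαX : 0 < α * X := (eunorm_nonneg _).trans_lt hpH
  have hβY : 0 < β * Y := (eunorm_nonneg _).trans_lt hcH
  have hα : 0 < α := pos_of_mul_pos_left hαX (abs_nonneg _)
  have hβ : 0 < β := pos_of_mul_pos_left hβY (abs_nonneg _)
  have hX : 0 < X := pos_of_mul_pos_right hαX hα.le
  have hY : 0 < Y := pos_of_mul_pos_right hβY hβ.le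
  have hαγ : α ≤ γ := (le_max_left α β).trans (le_max_left _ _)
  have hα₂ : α ^ 2 ≤ γ ^ 2 := pow_le_pow_left₀ hα.le hαγ 2
  have hβ₂ : β ^ 2 ≤ γ ^ 2 := pow_le_pow_left₀ hβ.le ((le_max_right α β).trans (le_max_left _ _)) 2
  have hεγ : ε₂ ^ 2 * ((α * β + 2 * β) * C) ≤ 4 * γ ^ 2 := by
    have h := pow_le_pow_left₀ (by positivity) (le_max_right (max α β) _ : _ ≤ γ) 2
    rw [mul_pow, Real.sq_sqrt (by positivity)] at h
    linarith
  have hTp : ε₂ ^ 2 * eunorm (vertCoord B p) < (α * X) ^ 2 := (mul_sqrt_lt_iff hε₂ hαX).1 hpV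
  have hTc : ε₂ ^ 2 * eunorm (vertCoord B c) < (β * Y) ^ 2 := (mul_sqrt_lt_iff hε₂ hβY).1 hcV
  have hT := eunorm_vertCoord_gmul_le_of_le B hB hC hCB hpH.le hcH.le
  rw [mul_sqrt_lt_iff hε₂ (mul_pos (hα.trans_le hαγ) (add_pos hX hY))]
  calc ε₂ ^ 2 * eunorm (vertCoord B (gmul B p c))
      ≤ ε₂ ^ 2 * eunorm (vertCoord B p) + ε₂ ^ 2 * eunorm (vertCoord B c)
        + ε₂ ^ 2 * ((α * β + 2 * β) * C) / 2 * (X * Y) := by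
        linarith [mul_le_mul_of_nonneg_left hT (sq_nonneg ε₂)]
    _ < α ^ 2 * X ^ 2 + β ^ 2 * Y ^ 2 + 2 * γ ^ 2 * (X * Y) := by
        linarith [mul_le_mul_of_nonneg_right hεγ (mul_pos hX hY).le]
    _ ≤ (γ * (X + Y)) ^ 2 := by
        linarith [mul_le_mul_of_nonneg_right hα₂ (sq_nonneg X),
          mul_le_mul_of_nonneg_right hβ₂ (sq_nonneg Y)]

theorem coneGauge_gmul_lt (hB : ∀ j, (B j)ᵀ = -B j) {ε₂ C : ℝ} (hε₂ : 0 ≤ ε₂) (hC : 0 ≤ C)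
    (hCB : ∀ x ξ : Fin (m + 1) → ℝ, eunorm (bvec B x ξ) ≤ C * eunorm x * eunorm ξ)
    {α β : ℝ} {p c : (Fin (m + 1) → ℝ) × (Fin m₂ → ℝ)}
    (hp : coneGauge B ε₂ p < α * |p.1 0|) (hc : coneGauge B ε₂ c < β * |c.1 0|)
    (habs : |p.1 0 + c.1 0| = |p.1 0| + |c.1 0|) :
    coneGauge B ε₂ (gmul B p c)
      < max (max α β) (ε₂ / 2 * Real.sqrt ((α * β + 2 * β) * C)) * |(gmul B p c).1 0| := by
  change _ < _ * |p.1 0 + c.1 0|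
  rw [habs]
  refine max_lt (eunorm_xperp_gmul_lt B ?_ ?_ (max_lt_iff.mp hp).1 (max_lt_iff.mp hc).1)
    (mul_sqrt_vertCoord_gmul_lt B hB hε₂ hC hCB hp hc)
  · exact (le_max_left α β).trans (le_max_left _ _)
  · exact (le_max_right α β).trans (le_max_left _ _)

end Cone

theorem stmt_15_general (m m₂ : ℕ) (B : Fin m₂ → Matrix (Fin (m + 1)) (Fin (m + 1)) ℝ)
    (hB : ∀ j, (B j)ᵀ = -B j) (ε₂ : ℝ) (hε₂ : 0 < ε₂)
    (C : ℝ) (hC : 0 < C)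
    (hCB : ∀ x ξ : Fin (m + 1) → ℝ, eunorm (bvec B x ξ) ≤ C * eunorm x * eunorm ξ)
    (α β : ℝ)
    (γ : ℝ) (hγ : γ = max (max α β) (ε₂ / 2 * Real.sqrt ((α * β + 2 * β) * C)))
    (p q : (Fin (m + 1) → ℝ) × (Fin m₂ → ℝ)) :
    (p ∈ posCone B ε₂ α → q ∈ (fun c => gmul B p c) '' posCone B ε₂ β →
        q ∈ posCone B ε₂ γ) ∧
    (p ∈ negCone B ε₂ α → q ∈ (fun c => gmul B p c) '' negCone B ε₂ β →
        q ∈ negCone B ε₂ γ) := by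
  subst hγ
  constructor
  · rintro ⟨hp, hp₀⟩ ⟨c, ⟨hc, hc₀⟩, rfl⟩
    refine ⟨coneGauge_gmul_lt B hB hε₂.le hC.le hCB hp hc ?_, add_pos hp₀ hc₀⟩
    exact (abs_add_eq_add_abs_iff _ _).2 (.inl ⟨hp₀.le, hc₀.le⟩)
  · rintro ⟨hp, hp₀⟩ ⟨c, ⟨hc, hc₀⟩, rfl⟩
    refine ⟨coneGauge_gmul_lt B hB hε₂.le hC.le hCB hp hc ?_, add_neg hp₀ hc₀⟩
    exact (abs_add_eq_add_abs_iff _ _).2 (.inr ⟨hp₀.le, hc₀.le⟩)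

/-- If `p ∈ C⁺(0,α)` and `q ∈ C⁺(p,β) = p ⋆ C⁺(0,β)` (with `α, β ≥ 0`), then
`q ∈ C⁺(0,γ)` for `γ = max{α, β, (ε₂/2)√((αβ+2β)C)}`; the analogous statement
holds for negative cones. -/
theorem stmt_15 (m m₂ : ℕ) (B : Fin m₂ → Matrix (Fin (m + 1)) (Fin (m + 1)) ℝ)
    (hB : ∀ j, (B j)ᵀ = -B j) (ε₂ : ℝ) (hε₂ : 0 < ε₂)
    (C : ℝ) (hC : 0 < C)
    (hCB : ∀ x ξ : Fin (m + 1) → ℝ, eunorm (bvec B x ξ) ≤ C * eunorm x * eunorm ξ)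
    (α β : ℝ) (hα : 0 ≤ α) (hβ : 0 ≤ β)
    (γ : ℝ) (hγ : γ = max (max α β) (ε₂ / 2 * Real.sqrt ((α * β + 2 * β) * C)))
    (p q : (Fin (m + 1) → ℝ) × (Fin m₂ → ℝ)) :
    (p ∈ posCone B ε₂ α → q ∈ (fun c => gmul B p c) '' posCone B ε₂ β →
        q ∈ posCone B ε₂ γ) ∧
    (p ∈ negCone B ε₂ α → q ∈ (fun c => gmul B p c) '' negCone B ε₂ β →
        q ∈ negCone B ε₂ γ) :=
  stmt_15_general m m₂ B hB ε₂ hε₂ C hC hCB α β γ hγ p q
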